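/- arXiv:1707.00634 — 2 statements merged into one kernel-verified Lean document; each statement's English description precedes it below -/
import Mathlib

section
/- Let a, b : Primes → ℝ be functions on the prime numbers such that |a_p − b_p| ≤ 4 for every prime p, and suppose that, as s → 1⁺, both Σ_p (a_p − b_p) p^{−s} = O(1) and Σ_p (a_p − b_p)² p^{−s} − 2 Σ_p p^{−s} = O(1). Then liminf_{s→1⁺} (Σ_{p : a_p < b_p} p^{−s}) / (Σ_p p^{−s}) ≥ 1/16; that is, the set {p : a_p < b_p} has analytic density at least 1/16. -/
/-!
Write `c = a - b`. For `|c| ≤ 4` one has `c² - 4c ≤ 0` when `c ≥ 0` and `c² - 4c ≤ 32` when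
`c < 0`, so summing against `p^{-s}` gives
`Σ c_p² p^{-s} - 4 Σ c_p p^{-s} ≤ 32 Σ_{c_p < 0} p^{-s}`.
By the hypotheses the left side is `2 Σ_p p^{-s} + O(1)`, and `Σ_p p^{-s} → ∞` as `s → 1⁺`
because `Σ_p 1/p` diverges; dividing by `Σ_p p^{-s}` gives the density bound `2/32 = 1/16`.
-/

open Filter Topology Asymptotics

theorem le_liminf_div_of_isBoundedUnder_sub {α : Type*} {l : Filter α} [l.NeBot]
    {F G : α → ℝ} {δ : ℝ} (hF : Tendsto F l atTop) (hGF : ∀ᶠ x in l, G x ≤ F x)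
    (hbdd : IsBoundedUnder (· ≤ ·) l fun x => δ * F x - G x) :
    δ ≤ liminf (fun x => G x / F x) l := by
  obtain ⟨K, hK⟩ := hbdd
  rw [eventually_map] at hK
  have hFpos : ∀ᶠ x in l, 0 < F x := hF.eventually_gt_atTop 0
  have hcobdd : IsCoboundedUnder (· ≥ ·) l fun x => G x / F x := by
    refine IsBoundedUnder.isCoboundedUnder_ge ⟨1, eventually_map.mpr ?_⟩
    filter_upwards [hGF, hFpos] with x hx hx0
    exact div_le_one_of_le₀ hx hx0.le
  refine le_of_forall_pos_le_add fun ε hε => ?_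
  rw [← sub_le_iff_le_add]
  refine le_liminf_of_le hcobdd ?_
  filter_upwards [hK, hFpos, hF.eventually_ge_atTop (K / ε)] with x hx hx0 hxK
  rw [le_div_iff₀ hx0]
  rw [div_le_iff₀ hε] at hxK
  nlinarith

namespace Nat.Primes

theorem rpow_neg_pos (p : Nat.Primes) (s : ℝ) : 0 < ((p : ℕ) : ℝ) ^ (-s) :=
  Real.rpow_pos_of_pos (by exact_mod_cast p.prop.pos) _

theorem summable_rpow_neg {s : ℝ} (hs : 1 < s) :
    Summable fun p : Nat.Primes => ((p : ℕ) : ℝ) ^ (-s) :=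
  Nat.Primes.summable_rpow.mpr (by linarith)

theorem summable_mul_rpow_neg {c : Nat.Primes → ℝ} {M : ℝ} (hc : ∀ p, |c p| ≤ M) {s : ℝ}
    (hs : 1 < s) : Summable fun p : Nat.Primes => c p * ((p : ℕ) : ℝ) ^ (-s) := by
  refine Summable.of_norm_bounded ((summable_rpow_neg hs).mul_left M) fun p => ?_
  rw [Real.norm_eq_abs, abs_mul, abs_of_pos (rpow_neg_pos p s)]
  exact mul_le_mul_of_nonneg_right (hc p) (rpow_neg_pos p s).le

theorem tendsto_tsum_rpow_neg_nhdsGT_one :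
    Tendsto (fun s : ℝ => ∑' p : Nat.Primes, ((p : ℕ) : ℝ) ^ (-s)) (𝓝[>] 1) atTop := by
  refine tendsto_atTop.mpr fun M => ?_
  obtain ⟨P, hP⟩ : ∃ P : Finset Nat.Primes, M < ∑ p ∈ P, ((p : ℕ) : ℝ) ^ (-(1 : ℝ)) := by
    by_contra! h
    refine Nat.Primes.not_summable_one_div (summable_of_sum_le (c := M)
      (fun p => by positivity) fun P => ?_)
    simpa [Real.rpow_neg_one] using h P
  have hcont : Continuous fun s : ℝ => ∑ p ∈ P, ((p : ℕ) : ℝ) ^ (-s) :=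
    continuous_finsetSum P fun p _ =>
      continuous_const.rpow continuous_neg fun _ => Or.inl (by exact_mod_cast p.prop.ne_zero)
  have hnear : ∀ᶠ s in 𝓝 (1 : ℝ), M < ∑ p ∈ P, ((p : ℕ) : ℝ) ^ (-s) :=
    (hcont.tendsto 1).eventually (eventually_gt_nhds hP)
  filter_upwards [nhdsWithin_le_nhds hnear, self_mem_nhdsWithin] with s hM hs
  exact hM.le.trans <|
    (summable_rpow_neg hs).sum_le_tsum P fun p _ => (rpow_neg_pos p s).le

theorem tsum_sq_mul_rpow_neg_sub_le {c : Nat.Primes → ℝ} (hc : ∀ p, |c p| ≤ 4)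
    (A : Set Nat.Primes) (hA : ∀ p, c p < 0 → p ∈ A) {s : ℝ} (hs : 1 < s) :
    (∑' p : Nat.Primes, c p ^ 2 * ((p : ℕ) : ℝ) ^ (-s))
        - 4 * ∑' p : Nat.Primes, c p * ((p : ℕ) : ℝ) ^ (-s)
      ≤ 32 * ∑' p : A, ((p.1 : ℕ) : ℝ) ^ (-s) := by
  have hc2 : ∀ p, |c p ^ 2| ≤ 16 := fun p => by
    rw [abs_pow, show (16 : ℝ) = 4 ^ 2 by norm_num]
    exact pow_le_pow_left₀ (abs_nonneg _) (hc p) 2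
  have hpointwise : ∀ p, c p ^ 2 * ((p : ℕ) : ℝ) ^ (-s) - 4 * (c p * ((p : ℕ) : ℝ) ^ (-s))
      ≤ A.indicator (fun p : Nat.Primes => 32 * ((p : ℕ) : ℝ) ^ (-s)) p := by
    intro p
    obtain ⟨hlo, hhi⟩ := abs_le.mp (hc p)
    have hw := rpow_neg_pos p s
    by_cases hp : p ∈ A
    · rw [Set.indicator_of_mem hp]
      nlinarith [mul_le_mul_of_nonneg_right (show c p ^ 2 - 4 * c p ≤ 32 by nlinarith) hw.le]
    · have : 0 ≤ c p := not_lt.mp fun h => hp (hA p h)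
      rw [Set.indicator_of_notMem hp]
      nlinarith [mul_le_mul_of_nonneg_right (show c p ^ 2 - 4 * c p ≤ 0 by nlinarith) hw.le]
  have hsummable_sq := summable_mul_rpow_neg hc2 hs
  have hsummable := (summable_mul_rpow_neg hc hs).mul_left 4
  calc (∑' p : Nat.Primes, c p ^ 2 * ((p : ℕ) : ℝ) ^ (-s))
        - 4 * ∑' p : Nat.Primes, c p * ((p : ℕ) : ℝ) ^ (-s)
      = ∑' p : Nat.Primes,
          (c p ^ 2 * ((p : ℕ) : ℝ) ^ (-s) - 4 * (c p * ((p : ℕ) : ℝ) ^ (-s))) := by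
        rw [← tsum_mul_left, hsummable_sq.tsum_sub hsummable]
    _ ≤ ∑' p : Nat.Primes, A.indicator (fun p : Nat.Primes => 32 * ((p : ℕ) : ℝ) ^ (-s)) p :=
        (hsummable_sq.sub hsummable).tsum_le_tsum hpointwise
          (((summable_rpow_neg hs).mul_left 32).indicator A)
    _ = 32 * ∑' p : A, ((p.1 : ℕ) : ℝ) ^ (-s) := by
        rw [← tsum_subtype A, tsum_mul_left]

end Nat.Primes

open Nat.Primes in
/-- If `|a p - b p| ≤ 4` for all primes `p`, and as `s → 1⁺` both
`Σ_p (a_p - b_p) p^{-s} = O(1)` and `Σ_p (a_p - b_p)² p^{-s} - 2 Σ_p p^{-s} = O(1)`,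
then the set `{p : a_p < b_p}` has analytic density at least `1/16`. -/
theorem statement0 (a b : Nat.Primes → ℝ)
    (hab : ∀ p : Nat.Primes, |a p - b p| ≤ 4)
    (h1 : (fun s : ℝ => ∑' p : Nat.Primes, (a p - b p) * ((p : ℕ) : ℝ) ^ (-s))
      =O[𝓝[>] (1 : ℝ)] (fun _ => (1 : ℝ)))
    (h2 : (fun s : ℝ => (∑' p : Nat.Primes, (a p - b p) ^ 2 * ((p : ℕ) : ℝ) ^ (-s))
        - 2 * ∑' p : Nat.Primes, ((p : ℕ) : ℝ) ^ (-s))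
      =O[𝓝[>] (1 : ℝ)] (fun _ => (1 : ℝ))) :
    (1 : ℝ) / 16 ≤ liminf (fun s : ℝ =>
      (∑' p : {p : Nat.Primes // a p < b p}, ((p.1 : ℕ) : ℝ) ^ (-s)) /
        ∑' p : Nat.Primes, ((p : ℕ) : ℝ) ^ (-s)) (𝓝[>] (1 : ℝ)) := by
  refine le_liminf_div_of_isBoundedUnder_sub tendsto_tsum_rpow_neg_nhdsGT_one ?_ ?_
  · filter_upwards [self_mem_nhdsWithin] with s hs
    exact (summable_rpow_neg hs).tsum_subtype_le _ {p | a p < b p}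
      fun p => (rpow_neg_pos p s).le
  · have hO := ((h1.const_mul_left (1 / 8)).sub (h2.const_mul_left (1 / 32))).isBoundedUnder_le
    refine (isBoundedUnder_le_abs.mp hO).1.mono_le ?_
    filter_upwards [self_mem_nhdsWithin] with s hs
    have key : (∑' p : Nat.Primes, (a p - b p) ^ 2 * ((p : ℕ) : ℝ) ^ (-s))
          - 4 * ∑' p : Nat.Primes, (a p - b p) * ((p : ℕ) : ℝ) ^ (-s)
        ≤ 32 * ∑' p : {p : Nat.Primes // a p < b p}, ((p.1 : ℕ) : ℝ) ^ (-s) :=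
      tsum_sq_mul_rpow_neg_sub_le hab {p | a p < b p} (fun p => sub_neg.mp) hs
    linarith
end

section
/- Let a, b : Primes → ℝ be functions on the prime numbers with |a_p| ≤ 2 and |b_p| ≤ 2 for every prime p. Suppose that, as s → 1⁺, Σ_p a_p p^{−s} = O(1), Σ_p b_p p^{−s} = O(1), Σ_p (a_p² − 1) p^{−s} = O(1), Σ_p (b_p² − 1) p^{−s} = O(1), and Σ_p a_p b_p p^{−s} = O(1). Then liminf_{s→1⁺} (Σ_{p : a_p < b_p} p^{−s}) / (Σ_p p^{−s}) ≥ 1/16; that is, the set {p : a_p < b_p} has analytic density at least 1/16. -/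
/-!
With `d = b p - a p` one has `|d| ≤ 4`, hence `d ^ 2 + 4 * d ≤ 32 * [a p < b p]`. Since
`d ^ 2 + 4 * d = 2 + (a p ^ 2 - 1) + (b p ^ 2 - 1) - 2 * a p * b p + 4 * b p - 4 * a p`, summing
against `p ^ (-s)` turns the left side into `2 * ∑ p ^ (-s) + O(1)` by the hypotheses, so
`∑_{a p < b p} p ^ (-s) ≥ (∑ p ^ (-s)) / 16 - O(1)`. The error term vanishes in the ratio because
`∑ p ^ (-s) → ∞` as `s → 1⁺`.
-/

open Filter Topology Asymptotics

theorem sq_add_mul_le_ite {d r : ℝ} (hd : |d| ≤ r) :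
    d ^ 2 + r * d ≤ if 0 < d then 2 * r ^ 2 else 0 := by
  obtain ⟨hlo, hhi⟩ := abs_le.mp hd
  split_ifs with h
  · nlinarith
  · nlinarith

theorem Summable.mul_left_of_abs_le {ι : Type*} {w c : ι → ℝ} {M : ℝ} (hw : Summable w)
    (hc : ∀ i, |c i| ≤ M) : Summable fun i => c i * w i :=
  (hw.abs.mul_left M).of_norm_bounded fun i => by
    rw [Real.norm_eq_abs, abs_mul]
    exact mul_le_mul_of_nonneg_right (hc i) (abs_nonneg _)

theorem tendsto_tsum_atTop_of_not_summable {α ι : Type*} {l : Filter α} {g : α → ι → ℝ}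
    {g₀ : ι → ℝ} (hg : ∀ i, Tendsto (fun x => g x i) l (𝓝 (g₀ i))) (hg₀ : 0 ≤ g₀)
    (hnonneg : ∀ x i, 0 ≤ g x i) (hsum : ∀ᶠ x in l, Summable (g x)) (hg₀_sum : ¬ Summable g₀) :
    Tendsto (fun x => ∑' i, g x i) l atTop := by
  refine tendsto_atTop.2 fun C => ?_
  obtain ⟨F, hF⟩ : ∃ F : Finset ι, C < ∑ i ∈ F, g₀ i := by
    by_contra! h
    exact hg₀_sum (summable_of_sum_le hg₀ h)
  filter_upwards [(tendsto_finsetSum F fun i _ => hg i).eventually_const_lt hF, hsum]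
    with x hC hx
  exact hC.le.trans (hx.sum_le_tsum F fun i _ => hnonneg x i)

theorem Nat.Primes.tendsto_tsum_rpow_neg_atTop :
    Tendsto (fun s : ℝ => ∑' p : Nat.Primes, ((p : ℕ) : ℝ) ^ (-s)) (𝓝[>] 1) atTop := by
  have hpos (p : Nat.Primes) : (0 : ℝ) < (p : ℕ) := by exact_mod_cast p.2.pos
  refine tendsto_tsum_atTop_of_not_summable (g₀ := fun p : Nat.Primes => ((p : ℕ) : ℝ) ^ (-1 : ℝ))
    (fun p => ?_) (fun p => Real.rpow_nonneg (hpos p).le _)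
    (fun s p => Real.rpow_nonneg (hpos p).le _) ?_ ?_
  · exact ((Real.continuousAt_const_rpow (hpos p).ne').comp continuous_neg.continuousAt).tendsto
      |>.mono_left nhdsWithin_le_nhds
  · filter_upwards [self_mem_nhdsWithin] with s (hs : 1 < s)
    exact Nat.Primes.summable_rpow.2 (neg_lt_neg hs)
  · exact fun h => lt_irrefl _ (Nat.Primes.summable_rpow.1 h)

theorem le_liminf_div_of_isBigO_one {α : Type*} {l : Filter α} [l.NeBot] {S T E : α → ℝ} {c : ℝ}
    (hS : Tendsto S l atTop) (hE : E =O[l] fun _ => (1 : ℝ))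
    (hlow : ∀ᶠ x in l, c * S x + E x ≤ T x) (hup : ∀ᶠ x in l, T x ≤ S x) :
    c ≤ liminf (fun x => T x / S x) l := by
  have hpos : ∀ᶠ x in l, 0 < S x := hS.eventually_gt_atTop 0
  have hEdiv : Tendsto (fun x => E x / S x) l (𝓝 0) :=
    (hE.trans_isLittleO ((isLittleO_one_left_iff ℝ).2
      (tendsto_norm_atTop_atTop.comp hS))).tendsto_div_nhds_zero
  have hlim : Tendsto (fun x => c + E x / S x) l (𝓝 c) := by
    simpa using (tendsto_const_nhds (x := c)).add hEdiv
  calc c = liminf (fun x => c + E x / S x) l := hlim.liminf_eq.symm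
    _ ≤ liminf (fun x => T x / S x) l := by
      refine liminf_le_liminf ?_ hlim.isBoundedUnder_ge
        (isCoboundedUnder_ge_of_eventually_le l (x := 1) ?_)
      · filter_upwards [hlow, hpos] with x hx hSx
        rw [le_div_iff₀ hSx, add_mul, div_mul_cancel₀ _ hSx.ne']
        linarith
      · filter_upwards [hup, hpos] with x hx hSx
        exact div_le_one_of_le₀ hx hSx.le

theorem two_mul_tsum_add_moments_le {ι : Type*} {w a b : ι → ℝ} (hw₀ : ∀ i, 0 ≤ w i)
    (hw : Summable w) (ha : ∀ i, |a i| ≤ 2) (hb : ∀ i, |b i| ≤ 2) :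
    2 * ∑' i, w i + (∑' i, (a i ^ 2 - 1) * w i + ∑' i, (b i ^ 2 - 1) * w i
        - 2 * ∑' i, a i * b i * w i + 4 * ∑' i, b i * w i - 4 * ∑' i, a i * w i) ≤
      32 * ∑' i : {i // a i < b i}, w i := by
  have hsq (c : ι → ℝ) (hc : ∀ i, |c i| ≤ 2) (i : ι) : |c i ^ 2 - 1| ≤ 3 := by
    have := abs_le.mp (hc i)
    exact abs_le.mpr ⟨by nlinarith, by nlinarith⟩
  have hab (i : ι) : |a i * b i| ≤ 4 := by
    rw [abs_mul]; nlinarith [ha i, hb i, abs_nonneg (a i), abs_nonneg (b i)]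
  have hT : HasSum ({i | a i < b i}.indicator w) (∑' i : {i // a i < b i}, w i) :=
    hasSum_subtype_iff_indicator.mp (hw.subtype {i | a i < b i}).hasSum
  have hcomb := (((((hw.hasSum.mul_left 2).add
    (hw.mul_left_of_abs_le (hsq a ha)).hasSum).add
    (hw.mul_left_of_abs_le (hsq b hb)).hasSum).sub
    ((hw.mul_left_of_abs_le hab).hasSum.mul_left 2)).add
    ((hw.mul_left_of_abs_le hb).hasSum.mul_left 4)).sub
    ((hw.mul_left_of_abs_le ha).hasSum.mul_left 4)
  refine le_of_eq_of_le (by ring) (hasSum_le (fun i => ?_) hcomb (hT.mul_left 32))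
  have hd : |b i - a i| ≤ 4 := (abs_sub _ _).trans (by linarith [ha i, hb i])
  have key := mul_le_mul_of_nonneg_right (sq_add_mul_le_ite hd) (hw₀ i)
  by_cases h : a i < b i
  · rw [if_pos (sub_pos.2 h)] at key
    rw [Set.indicator_of_mem (show i ∈ {i | a i < b i} from h)]
    linarith
  · rw [if_neg (mt sub_pos.1 h)] at key
    rw [Set.indicator_of_notMem (show i ∉ {i | a i < b i} from h)]
    linarith

/-- Theorem 1 of the paper, axiomatized form: If `|a p| ≤ 2`, `|b p| ≤ 2`
for all primes `p`, and as `s → 1⁺` the sums `Σ_p a_p p^{-s}`, `Σ_p b_p p^{-s}`,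
`Σ_p (a_p² - 1) p^{-s}`, `Σ_p (b_p² - 1) p^{-s}` and `Σ_p a_p b_p p^{-s}` are all `O(1)`,
then the set `{p : a_p < b_p}` has analytic density at least `1/16`. -/
theorem statement5 (a b : Nat.Primes → ℝ)
    (ha : ∀ p : Nat.Primes, |a p| ≤ 2) (hb : ∀ p : Nat.Primes, |b p| ≤ 2)
    (h1 : (fun s : ℝ => ∑' p : Nat.Primes, a p * ((p : ℕ) : ℝ) ^ (-s))
      =O[𝓝[>] (1 : ℝ)] (fun _ => (1 : ℝ)))
    (h2 : (fun s : ℝ => ∑' p : Nat.Primes, b p * ((p : ℕ) : ℝ) ^ (-s))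
      =O[𝓝[>] (1 : ℝ)] (fun _ => (1 : ℝ)))
    (h3 : (fun s : ℝ => ∑' p : Nat.Primes, (a p ^ 2 - 1) * ((p : ℕ) : ℝ) ^ (-s))
      =O[𝓝[>] (1 : ℝ)] (fun _ => (1 : ℝ)))
    (h4 : (fun s : ℝ => ∑' p : Nat.Primes, (b p ^ 2 - 1) * ((p : ℕ) : ℝ) ^ (-s))
      =O[𝓝[>] (1 : ℝ)] (fun _ => (1 : ℝ)))
    (h5 : (fun s : ℝ => ∑' p : Nat.Primes, a p * b p * ((p : ℕ) : ℝ) ^ (-s))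
      =O[𝓝[>] (1 : ℝ)] (fun _ => (1 : ℝ))) :
    (1 : ℝ) / 16 ≤ liminf (fun s : ℝ =>
      (∑' p : {p : Nat.Primes // a p < b p}, ((p.1 : ℕ) : ℝ) ^ (-s)) /
        ∑' p : Nat.Primes, ((p : ℕ) : ℝ) ^ (-s)) (𝓝[>] (1 : ℝ)) := by
  have hpos (s : ℝ) (p : Nat.Primes) : (0 : ℝ) ≤ ((p : ℕ) : ℝ) ^ (-s) := by positivity
  have hsum {s : ℝ} (hs : 1 < s) := Nat.Primes.summable_rpow.2 (neg_lt_neg hs)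
  have hE := ((((h3.add h4).sub (h5.const_mul_left 2)).add (h2.const_mul_left 4)).sub
    (h1.const_mul_left 4)).const_mul_left (1 / 32)
  refine le_liminf_div_of_isBigO_one Nat.Primes.tendsto_tsum_rpow_neg_atTop hE ?_ ?_ <;>
    filter_upwards [self_mem_nhdsWithin] with s (hs : 1 < s)
  · linarith [two_mul_tsum_add_moments_le (hpos s) (hsum hs) ha hb]
  · exact (hsum hs).tsum_subtype_le _ {p | a p < b p} (hpos s)
end
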